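/- Let p be a prime and F a finite field with Fintype.card F = p^2 and CharP F p, let α ∈ F generate the unit group Fˣ, and let f : F → ZMod (p^2 − 1) satisfy α ^ (f x).val = x for all nonzero x ∈ F. Let x₁, x₂ ∈ ZMod p be nonzero. Then the function g : ZMod p × ZMod p → ZMod (p^2 − 1) given by g (i, j) = f (((x₁ * i : ZMod p) : F) * α + ((x₂ * j : ZMod p) : F)) has the periodic Costas property, where (· : F) denotes the canonical ring map ZMod p → F. -/

import Mathlib

/-!
Identify `(i, j)` with `x₁ i α + x₂ j ∈ F`. Since every nonzero element of `F` is a power of `α`,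
`α` cannot lie in the prime field (else the prime field would be all of `F`), so this map is an
injective additive map `ℤ_p² → F`.
Equal differences of discrete logarithms mean equal ratios:
`(A + H) / A = (B + H) / B` for the images `A, B, H` of `a, b, h`. Clearing denominators gives
`H B = H A`, hence `A = B` as `H ≠ 0`, and `a = b` by injectivity.
-/

/-- The periodic Costas (distinct difference) property for a three-dimensional
array `g : ℤ_p × ℤ_p → ℤ_{p^2 - 1}`. -/
def PeriodicCostas2 (p n : ℕ) (g : ZMod p × ZMod p → ZMod n) : Prop :=
  ∀ h : ZMod p × ZMod p, h ≠ 0 → ∀ a b : ZMod p × ZMod p,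
    a ≠ 0 → b ≠ 0 → a + h ≠ 0 → b + h ≠ 0 →
    g (a + h) - g a = g (b + h) - g b → a = b

open Function

theorem pow_val_add_of_pow_eq_one {M : Type*} [Monoid M] {n : ℕ} [NeZero n] {α : M}
    (hα : α ^ n = 1) (s t : ZMod n) : α ^ (s + t).val = α ^ s.val * α ^ t.val := by
  rw [ZMod.val_add, ← pow_eq_pow_mod _ hα, pow_add]

theorem mul_eq_mul_of_log_sub_eq_sub {M : Type*} [CommMonoid M] {n : ℕ} [NeZero n] {α : M}
    (hα : α ^ n = 1) {f : M → ZMod n} {y₁ z₁ y₂ z₂ : M}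
    (hy₁ : α ^ (f y₁).val = y₁) (hz₁ : α ^ (f z₁).val = z₁)
    (hy₂ : α ^ (f y₂).val = y₂) (hz₂ : α ^ (f z₂).val = z₂)
    (h : f y₁ - f z₁ = f y₂ - f z₂) : y₁ * z₂ = y₂ * z₁ := by
  set d := f y₁ - f z₁
  have e₁ : y₁ = α ^ d.val * z₁ := by
    rw [← hz₁, ← pow_val_add_of_pow_eq_one hα, sub_add_cancel, hy₁]
  have e₂ : y₂ = α ^ d.val * z₂ := by
    rw [← hz₂, ← pow_val_add_of_pow_eq_one hα, h, sub_add_cancel, hy₂]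
  rw [e₁, e₂, mul_right_comm]

theorem periodicCostas2_log_comp {p n : ℕ} [NeZero n] {K : Type*} [Field K] {α : K}
    (hα : α ^ n = 1) {f : K → ZMod n} (hf : ∀ y : K, y ≠ 0 → α ^ (f y).val = y)
    (φ : ZMod p × ZMod p →+ K) (hφ : Injective φ) :
    PeriodicCostas2 p n (fun ij => f (φ ij)) := by
  intro h hh a b ha hb hah hbh hdiff
  have hne : ∀ {v}, v ≠ 0 → φ v ≠ 0 := fun hv => (map_ne_zero_iff φ hφ).mpr hv
  have key := mul_eq_mul_of_log_sub_eq_sub hα (hf _ (hne hah)) (hf _ (hne ha))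
    (hf _ (hne hbh)) (hf _ (hne hb)) hdiff
  rw [map_add, map_add] at key
  have hcancel : φ h * φ b = φ h * φ a := by linear_combination key
  exact hφ (mul_left_cancel₀ (hne hh) hcancel).symm

theorem RingHom.notMem_range_of_card_lt {k K : Type*} [Ring k] [Fintype k] [Ring K] [Fintype K]
    (c : k →+* K) (hcard : Fintype.card k < Fintype.card K) {α : K}
    (hgen : ∀ y : K, y ≠ 0 → ∃ m : ℕ, α ^ m = y) : α ∉ c.range := by
  intro hα
  have hsurj : Surjective c := by
    intro y
    rcases eq_or_ne y 0 with rfl | hy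
    · exact ⟨0, map_zero c⟩
    · obtain ⟨m, rfl⟩ := hgen y hy
      exact c.range.pow_mem hα m
  exact (Fintype.card_le_of_surjective c hsurj).not_gt hcard

theorem RingHom.map_mul_add_map_eq_zero_iff {k K : Type*} [Field k] [Field K] (c : k →+* K)
    {α : K} (hα : α ∉ c.range) {a b : k} : c a * α + c b = 0 ↔ a = 0 ∧ b = 0 := by
  refine ⟨fun h => ?_, fun ⟨ha, hb⟩ => by simp [ha, hb]⟩
  by_cases ha : a = 0
  · subst ha
    rw [map_zero, zero_mul, zero_add, map_eq_zero] at h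
    exact ⟨rfl, h⟩
  · have hca : c a ≠ 0 := (map_ne_zero c).mpr ha
    refine absurd ⟨-b / a, ?_⟩ hα
    rw [map_div₀, map_neg, div_eq_iff hca]
    linear_combination -h

def welchEmbedding {k K : Type*} [Semiring k] [CommSemiring K] (c : k →+* K) (α : K)
    (x₁ x₂ : k) : k × k →+ K where
  toFun ij := c (x₁ * ij.1) * α + c (x₂ * ij.2)
  map_zero' := by simp
  map_add' v w := by
    simp only [Prod.fst_add, Prod.snd_add, mul_add, map_add]
    ring

theorem welchEmbedding_injective {k K : Type*} [Field k] [Field K] (c : k →+* K) {α : K}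
    (hα : α ∉ c.range) {x₁ x₂ : k} (hx₁ : x₁ ≠ 0) (hx₂ : x₂ ≠ 0) :
    Injective (welchEmbedding c α x₁ x₂) := by
  rw [injective_iff_map_eq_zero]
  intro ij h
  obtain ⟨h₁, h₂⟩ := (c.map_mul_add_map_eq_zero_iff hα).mp h
  exact Prod.ext ((mul_eq_zero.mp h₁).resolve_left hx₁) ((mul_eq_zero.mp h₂).resolve_left hx₂)

theorem G1_welch_periodicCostas_general
    (p : ℕ) (hp : p.Prime)
    (F : Type*) [Field F] [Fintype F] (hF : Fintype.card F = p ^ 2) [CharP F p]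
    (α : F)
    (f : F → ZMod (p ^ 2 - 1))
    (hf : ∀ y : F, y ≠ 0 → α ^ (f y).val = y)
    (x₁ x₂ : ZMod p) (hx₁ : x₁ ≠ 0) (hx₂ : x₂ ≠ 0) :
    PeriodicCostas2 p (p ^ 2 - 1) (fun ij =>
      f ((ZMod.castHom (dvd_refl p) F (x₁ * ij.1)) * α +
         (ZMod.castHom (dvd_refl p) F (x₂ * ij.2)))) := by
  have : Fact p.Prime := ⟨hp⟩
  have : NeZero (p ^ 2 - 1) := ⟨Nat.sub_ne_zero_of_lt (Nat.one_lt_pow two_ne_zero hp.one_lt)⟩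
  set c := ZMod.castHom (dvd_refl p) F
  have hα : α ∉ c.range :=
    c.notMem_range_of_card_lt (by rw [ZMod.card, hF]; nlinarith [hp.two_le]) fun y hy => ⟨_, hf y hy⟩
  have hα₀ : α ≠ 0 := fun h => hα (h ▸ c.range.zero_mem)
  have hα_pow : α ^ (p ^ 2 - 1) = 1 := hF ▸ FiniteField.pow_card_sub_one_eq_one α hα₀
  exact periodicCostas2_log_comp hα_pow hf _ (welchEmbedding_injective c hα hx₁ hx₂)

/-- Applying the row-and-column multiplication `G1` to the three-dimensional
periodic Welch Costas array over `ℤ_p × ℤ_p` yields an array with the periodic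
Costas property. -/
theorem G1_welch_periodicCostas
    (p : ℕ) (hp : p.Prime)
    (F : Type*) [Field F] [Fintype F] (hF : Fintype.card F = p ^ 2) [CharP F p]
    (α : F) (hα : ∀ y : F, y ≠ 0 → ∃ k : ℕ, α ^ k = y)
    (f : F → ZMod (p ^ 2 - 1))
    (hf : ∀ y : F, y ≠ 0 → α ^ (f y).val = y)
    (x₁ x₂ : ZMod p) (hx₁ : x₁ ≠ 0) (hx₂ : x₂ ≠ 0) :
    PeriodicCostas2 p (p ^ 2 - 1) (fun ij =>
      f ((ZMod.castHom (dvd_refl p) F (x₁ * ij.1)) * α +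
         (ZMod.castHom (dvd_refl p) F (x₂ * ij.2)))) :=
  G1_welch_periodicCostas_general p hp F hF α f hf x₁ x₂ hx₁ hx₂
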